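/- Let f : [0,1] → ℝ be continuous, nonnegative, and monotone increasing with f(0)=0 and f(r)>0 for r in (0,1]. Let r ∈ (0,1) and let d_r(z) = (z+r)/(rz+1) be the disk automorphism. Then for every z in the open unit disk, f(|d_r(z)|)·cos(arg d_r(z)) > f(|z|)·cos(arg z), where the function f(|w|)·cos(arg w) is interpreted as f(|w|)·Re(w)/|w| (equal to 0 at w=0). -/

import Mathlib

open Complex Metric

/-- The Möbius transformation `d_ξ(z) = (z+ξ)/(conj ξ · z + 1)` of the unit disk. -/
noncomputable def diskMobius (ξ z : ℂ) : ℂ := (z + ξ) / ((starRingEnd ℂ) ξ * z + 1)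

/-- The model eigenfunction profile `X(w) = f(|w|)·Re(w)/|w|`, with `X(0) = 0`. -/
noncomputable def profileFn (f : ℝ → ℝ) (w : ℂ) : ℝ :=
  if w = 0 then 0 else f ‖w‖ * w.re / ‖w‖

/-!
Write `w = d_r z` and `G = 2 Re z + r (1 + |z|²)`. After clearing the denominator `|rz + 1|²`,
`|w|² - |z|²` becomes `r (1 - |z|²) G`, `2 Re w` becomes `(1 + r²) G + r (1 - r²)(1 + |z|²)`, and
`(Re w · |z|)² - (Re z · |w|)²` becomes `(Im z)² r (|z + r|² + 1 - r²) G` (over `|rz + 1|⁴`).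
Hence `d_r` never decreases `Re w / |w| = cos arg w`, moves points with `Re z ≥ 0` outward and into
the open right half-plane, and moves inward the points it sends to the open left half-plane.
Comparing `X z = f |z| · cos arg z` with `X w` then needs only the monotonicity of `f` when
`Re z ≥ 0` or `Re w < 0`, and a sign count when `Re z < 0 ≤ Re w`.
-/

open Set

lemma normSq_conj_mul_add_one_sub_normSq_add (ξ z : ℂ) :
    normSq (starRingEnd ℂ ξ * z + 1) - normSq (z + ξ) = (1 - normSq ξ) * (1 - normSq z) := by
  simp only [normSq_apply, add_re, add_im, mul_re, mul_im, conj_re, conj_im, one_re, one_im]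
  ring

lemma norm_diskMobius_lt_one {ξ z : ℂ} (hξ : ‖ξ‖ < 1) (hz : ‖z‖ < 1) :
    ‖diskMobius ξ z‖ < 1 := by
  have hξ' : normSq ξ < 1 := by
    rw [← Complex.sq_norm]; exact pow_lt_one₀ (norm_nonneg ξ) hξ two_ne_zero
  have hz' : normSq z < 1 := by
    rw [← Complex.sq_norm]; exact pow_lt_one₀ (norm_nonneg z) hz two_ne_zero
  have h : ‖z + ξ‖ < ‖starRingEnd ℂ ξ * z + 1‖ := by
    rw [← sq_lt_sq₀ (norm_nonneg _) (norm_nonneg _), Complex.sq_norm, Complex.sq_norm, ← sub_pos,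
      normSq_conj_mul_add_one_sub_normSq_add]
    exact mul_pos (sub_pos.2 hξ') (sub_pos.2 hz')
  rw [diskMobius, norm_div]
  exact (div_lt_one ((norm_nonneg _).trans_lt h)).2 h

lemma profileFn_eq_mul_re_div_norm (f : ℝ → ℝ) (w : ℂ) :
    profileFn f w = f ‖w‖ * (w.re / ‖w‖) := by
  rw [profileFn, mul_div_assoc]
  split_ifs with hw
  · simp [hw]
  · rfl

lemma profileFn_lt_profileFn {f : ℝ → ℝ} (hf : StrictMonoOn f (Icc 0 1)) (hf₀ : 0 ≤ f 0)
    {z w : ℂ} (hz : ‖z‖ ≤ 1) (hw : ‖w‖ ≤ 1) (hcos : z.re / ‖z‖ ≤ w.re / ‖w‖)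
    (hright : 0 ≤ z.re → ‖z‖ < ‖w‖ ∧ 0 < w.re) (hleft : w.re < 0 → ‖w‖ < ‖z‖) :
    profileFn f z < profileFn f w := by
  have hzI : ‖z‖ ∈ Icc (0 : ℝ) 1 := ⟨norm_nonneg z, hz⟩
  have hwI : ‖w‖ ∈ Icc (0 : ℝ) 1 := ⟨norm_nonneg w, hw⟩
  have hf_nonneg : ∀ t ∈ Icc (0 : ℝ) 1, 0 ≤ f t := fun t ht =>
    hf₀.trans (hf.monotoneOn (left_mem_Icc.2 zero_le_one) ht ht.1)
  rw [profileFn_eq_mul_re_div_norm, profileFn_eq_mul_re_div_norm]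
  rcases le_or_gt 0 z.re with hz_re | hz_re
  · obtain ⟨hzw, hw_re⟩ := hright hz_re
    calc f ‖z‖ * (z.re / ‖z‖) ≤ f ‖z‖ * (w.re / ‖w‖) :=
          mul_le_mul_of_nonneg_left hcos (hf_nonneg _ hzI)
      _ < f ‖w‖ * (w.re / ‖w‖) :=
          mul_lt_mul_of_pos_right (hf hzI hwI hzw) (div_pos hw_re (hw_re.trans_le (re_le_norm w)))
  have hz_pos : 0 < ‖z‖ := (abs_pos.2 hz_re.ne).trans_le (abs_re_le_norm z)
  rcases le_or_gt 0 w.re with hw_re | hw_re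
  · have hfz : 0 < f ‖z‖ :=
      hf₀.trans_lt (hf (left_mem_Icc.2 zero_le_one) hzI hz_pos)
    calc f ‖z‖ * (z.re / ‖z‖) < 0 :=
          mul_neg_of_pos_of_neg hfz (div_neg_of_neg_of_pos hz_re hz_pos)
      _ ≤ f ‖w‖ * (w.re / ‖w‖) :=
          mul_nonneg (hf_nonneg _ hwI) (div_nonneg hw_re (norm_nonneg w))
  · calc f ‖z‖ * (z.re / ‖z‖) ≤ f ‖z‖ * (w.re / ‖w‖) :=
          mul_le_mul_of_nonneg_left hcos (hf_nonneg _ hzI)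
      _ < f ‖w‖ * (w.re / ‖w‖) :=
          mul_lt_mul_of_neg_right (hf hwI hzI (hleft hw_re))
            (div_neg_of_neg_of_pos hw_re ((abs_pos.2 hw_re.ne).trans_le (abs_re_le_norm w)))

lemma diskMobius_ofReal (r : ℝ) (z : ℂ) : diskMobius r z = (z + r) / (r * z + 1) := by
  rw [diskMobius, conj_ofReal]

section RealParameter

variable {r : ℝ} {z : ℂ}

lemma re_diskMobius_mul_normSq (hD : (r : ℂ) * z + 1 ≠ 0) :
    (diskMobius r z).re * normSq (r * z + 1) = r * (1 + ‖z‖ ^ 2) + (1 + r ^ 2) * z.re := by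
  have hD' : normSq ((r : ℂ) * z + 1) ≠ 0 := normSq_eq_zero.not.2 hD
  rw [diskMobius_ofReal, div_re, ← add_div, div_mul_cancel₀ _ hD', Complex.sq_norm, normSq_apply]
  simp only [add_re, add_im, mul_re, mul_im, ofReal_re, ofReal_im, one_re, one_im]
  ring

lemma sq_norm_diskMobius_mul_normSq (hD : (r : ℂ) * z + 1 ≠ 0) :
    ‖diskMobius r z‖ ^ 2 * normSq (r * z + 1) = normSq (z + r) := by
  rw [Complex.sq_norm, diskMobius_ofReal, normSq_div, div_mul_cancel₀ _ (normSq_eq_zero.not.2 hD)]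

lemma sq_norm_diskMobius_sub_sq_norm (hD : (r : ℂ) * z + 1 ≠ 0) :
    (‖diskMobius r z‖ ^ 2 - ‖z‖ ^ 2) * normSq (r * z + 1) =
      r * (1 - ‖z‖ ^ 2) * (2 * z.re + r * (1 + ‖z‖ ^ 2)) := by
  rw [sub_mul, sq_norm_diskMobius_mul_normSq hD, Complex.sq_norm]
  simp only [normSq_apply, add_re, add_im, mul_re, mul_im, ofReal_re, ofReal_im, one_re, one_im]
  ring

lemma sq_re_mul_norm_diskMobius_sub (hD : (r : ℂ) * z + 1 ≠ 0) :
    (((diskMobius r z).re * ‖z‖) ^ 2 - (z.re * ‖diskMobius r z‖) ^ 2) * normSq (r * z + 1) ^ 2 =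
      z.im ^ 2 * r * (normSq (z + r) + (1 - r ^ 2)) * (2 * z.re + r * (1 + ‖z‖ ^ 2)) := by
  have hre := re_diskMobius_mul_normSq hD
  have hnorm := sq_norm_diskMobius_mul_normSq hD
  calc _ = ((diskMobius r z).re * normSq (r * z + 1)) ^ 2 * ‖z‖ ^ 2
        - z.re ^ 2 * (‖diskMobius r z‖ ^ 2 * normSq (r * z + 1)) * normSq (r * z + 1) := by ring
    _ = _ := by
      rw [hre, hnorm, Complex.sq_norm]
      simp only [normSq_apply, add_re, add_im, mul_re, mul_im, ofReal_re, ofReal_im, one_re, one_im]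
      ring

lemma ofReal_mul_add_one_ne_zero (hr₀ : 0 < r) (hr₁ : r < 1) (hz : ‖z‖ < 1) :
    (r : ℂ) * z + 1 ≠ 0 := by
  have hlt : ‖(r : ℂ) * z‖ < 1 := by
    rw [norm_mul, norm_real, Real.norm_of_nonneg hr₀.le]
    exact mul_lt_one_of_nonneg_of_lt_one_left hr₀.le hr₁ hz.le
  intro h
  rw [add_eq_zero_iff_eq_neg.1 h, norm_neg, norm_one] at hlt
  exact lt_irrefl _ hlt

lemma norm_lt_norm_diskMobius (hr₀ : 0 < r) (hr₁ : r < 1) (hz : ‖z‖ < 1)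
    (hG : 0 < 2 * z.re + r * (1 + ‖z‖ ^ 2)) : ‖z‖ < ‖diskMobius r z‖ := by
  have hD := ofReal_mul_add_one_ne_zero hr₀ hr₁ hz
  have hρ : 0 < 1 - ‖z‖ ^ 2 := sub_pos.2 (pow_lt_one₀ (norm_nonneg z) hz two_ne_zero)
  have h := sq_norm_diskMobius_sub_sq_norm hD
  rw [← sq_lt_sq₀ (norm_nonneg _) (norm_nonneg _), ← sub_pos,
    ← mul_pos_iff_of_pos_right (normSq_pos.2 hD), h]
  exact mul_pos (mul_pos hr₀ hρ) hG

lemma norm_diskMobius_lt_norm (hr₀ : 0 < r) (hr₁ : r < 1) (hz : ‖z‖ < 1)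
    (hG : 2 * z.re + r * (1 + ‖z‖ ^ 2) < 0) : ‖diskMobius r z‖ < ‖z‖ := by
  have hD := ofReal_mul_add_one_ne_zero hr₀ hr₁ hz
  have hρ : 0 < 1 - ‖z‖ ^ 2 := sub_pos.2 (pow_lt_one₀ (norm_nonneg z) hz two_ne_zero)
  have h := sq_norm_diskMobius_sub_sq_norm hD
  rw [← sq_lt_sq₀ (norm_nonneg _) (norm_nonneg _), ← sub_neg]
  exact neg_of_mul_neg_left (h ▸ mul_neg_of_pos_of_neg (mul_pos hr₀ hρ) hG) (normSq_nonneg _)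

lemma re_diskMobius_pos (hr₀ : 0 < r) (hr₁ : r < 1) (hz : ‖z‖ < 1)
    (hG : 0 ≤ 2 * z.re + r * (1 + ‖z‖ ^ 2)) : 0 < (diskMobius r z).re := by
  have hD := ofReal_mul_add_one_ne_zero hr₀ hr₁ hz
  have hr : 0 < 1 - r ^ 2 := sub_pos.2 (pow_lt_one₀ hr₀.le hr₁ two_ne_zero)
  rw [← mul_pos_iff_of_pos_right (normSq_pos.2 hD), re_diskMobius_mul_normSq hD]
  nlinarith [mul_nonneg (by positivity : (0 : ℝ) ≤ 1 + r ^ 2) hG,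
    mul_pos (by positivity : 0 < r * (1 + ‖z‖ ^ 2)) hr]

lemma re_mul_norm_diskMobius_le (hr₀ : 0 < r) (hr₁ : r < 1) (hz : ‖z‖ < 1) :
    z.re * ‖diskMobius r z‖ ≤ (diskMobius r z).re * ‖z‖ := by
  have hD := ofReal_mul_add_one_ne_zero hr₀ hr₁ hz
  have hD2 : 0 < normSq ((r : ℂ) * z + 1) ^ 2 := pow_pos (normSq_pos.2 hD) 2
  have hE : 0 ≤ z.im ^ 2 * r * (normSq (z + r) + (1 - r ^ 2)) :=
    mul_nonneg (mul_nonneg (sq_nonneg _) hr₀.le)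
      (add_nonneg (normSq_nonneg _) (sub_nonneg.2 (pow_le_one₀ hr₀.le hr₁.le)))
  have h := sq_re_mul_norm_diskMobius_sub hD
  rcases le_or_gt 0 (2 * z.re + r * (1 + ‖z‖ ^ 2)) with hG | hG
  · have hsq : (z.re * ‖diskMobius r z‖) ^ 2 ≤ ((diskMobius r z).re * ‖z‖) ^ 2 := by
      rw [← sub_nonneg, ← mul_nonneg_iff_of_pos_right hD2, h]
      exact mul_nonneg hE hG
    exact (abs_le_of_sq_le_sq' hsq
      (mul_nonneg (re_diskMobius_pos hr₀ hr₁ hz hG).le (norm_nonneg z))).2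
  · have hx : z.re < 0 := by
      by_contra! hx
      exact hG.not_ge (by positivity)
    have hsq : ((diskMobius r z).re * ‖z‖) ^ 2 ≤ (-(z.re * ‖diskMobius r z‖)) ^ 2 := by
      rw [neg_sq, ← sub_nonpos]
      exact nonpos_of_mul_nonpos_left (h ▸ mul_nonpos_of_nonneg_of_nonpos hE hG.le) hD2
    simpa using (abs_le_of_sq_le_sq' hsq
      (neg_nonneg.2 (mul_nonpos_of_nonpos_of_nonneg hx.le (norm_nonneg _)))).1

lemma re_div_norm_le_re_diskMobius_div_norm (hr₀ : 0 < r) (hr₁ : r < 1) (hz : ‖z‖ < 1) :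
    z.re / ‖z‖ ≤ (diskMobius r z).re / ‖diskMobius r z‖ := by
  have hre_pos : 0 ≤ z.re → 0 < (diskMobius r z).re := fun hx =>
    re_diskMobius_pos hr₀ hr₁ hz (by positivity)
  rcases eq_or_ne z 0 with rfl | hz₀
  · rw [zero_re, zero_div]
    exact div_nonneg (hre_pos le_rfl).le (norm_nonneg _)
  rcases eq_or_ne (diskMobius r z) 0 with hw₀ | hw₀
  · have hx : z.re < 0 := by
      by_contra! hx
      simpa [hw₀] using hre_pos hx
    rw [hw₀, zero_re, zero_div]
    exact div_nonpos_of_nonpos_of_nonneg hx.le (norm_nonneg z)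
  rw [div_le_div_iff₀ (norm_pos_iff.2 hz₀) (norm_pos_iff.2 hw₀)]
  exact re_mul_norm_diskMobius_le hr₀ hr₁ hz

end RealParameter

theorem profile_increases_under_mobius_general (f : ℝ → ℝ)
    (hmono : StrictMonoOn f (Set.Icc 0 1))
    (hf0 : f 0 = 0)
    (r : ℝ) (hr : r ∈ Set.Ioo (0 : ℝ) 1) :
    ∀ z ∈ ball (0 : ℂ) 1,
      profileFn f (diskMobius (r : ℂ) z) > profileFn f z := by
  obtain ⟨hr₀, hr₁⟩ := hr
  intro z hz
  rw [mem_ball_zero_iff] at hz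
  have hG : 0 ≤ z.re → 0 < 2 * z.re + r * (1 + ‖z‖ ^ 2) := fun hx => by positivity
  have hr_norm : ‖(r : ℂ)‖ < 1 := by rwa [norm_real, Real.norm_of_nonneg hr₀.le]
  refine profileFn_lt_profileFn hmono hf0.ge hz.le (norm_diskMobius_lt_one hr_norm hz).le
    (re_div_norm_le_re_diskMobius_div_norm hr₀ hr₁ hz)
    (fun hx => ⟨norm_lt_norm_diskMobius hr₀ hr₁ hz (hG hx),
      re_diskMobius_pos hr₀ hr₁ hz (hG hx).le⟩)
    (fun hw => norm_diskMobius_lt_norm hr₀ hr₁ hz ?_)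
  by_contra! hG'
  exact hw.not_ge (re_diskMobius_pos hr₀ hr₁ hz hG').le

/-- if `f` is continuous, nonnegative and (strictly) monotone increasing on
`[0,1]` with `f 0 = 0` and `f > 0` on `(0,1]`, and `r ∈ (0,1)`, then
`f(|d_r z|)·cos(arg (d_r z)) > f(|z|)·cos(arg z)` for every `z` in the open unit disk. -/
theorem profile_increases_under_mobius (f : ℝ → ℝ)
    (hcont : ContinuousOn f (Set.Icc 0 1))
    (hnonneg : ∀ x ∈ Set.Icc (0 : ℝ) 1, 0 ≤ f x)
    (hmono : StrictMonoOn f (Set.Icc 0 1))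
    (hf0 : f 0 = 0) (hfpos : ∀ x ∈ Set.Ioc (0 : ℝ) 1, 0 < f x)
    (r : ℝ) (hr : r ∈ Set.Ioo (0 : ℝ) 1) :
    ∀ z ∈ ball (0 : ℂ) 1,
      profileFn f (diskMobius (r : ℂ) z) > profileFn f z :=
  profile_increases_under_mobius_general f hmono hf0 r hr
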